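/- Let T_1, ..., T_{n+1} be exchangeable, almost surely pairwise-distinct real random variables, and define f = (1/(n+1)) * #{i in {1,...,n+1} : T_{n+1} <= T_i}. Then f is uniformly distributed on {1/(n+1), 2/(n+1), ..., 1}, and in particular P(f <= alpha) = floor(alpha*(n+1))/(n+1) <= alpha for all alpha in (0,1). -/

import Mathlib

open MeasureTheory Finset
open scoped ENNReal

/-! On the almost sure event that the coordinates are distinct, their ranks counted from the top,
`#{i | T j ≤ T i}`, are a permutation of `1, …, n + 1`; so for each `k` the events
`{the rank of T j is k}`, `j = 0, …, n`, partition the sample space up to a null set.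
Exchangeability, applied to a transposition, makes these `n + 1` events equally likely, hence each
has probability `1 / (n + 1)`. The distribution function follows by summing over
`k ≤ ⌊α (n + 1)⌋`. -/

namespace GFTransducer

section Rank

variable {ι α : Type*} [Fintype ι] [LinearOrder α]

def upperRank (x : ι → α) (j : ι) : ℕ := #{i | x j ≤ x i}

theorem upperRank_comp_perm (x : ι → α) (σ : Equiv.Perm ι) (j : ι) :
    upperRank (x ∘ σ) j = upperRank x (σ j) :=
  card_equiv σ (by simp)

theorem upperRank_mem_Icc (x : ι → α) (j : ι) : upperRank x j ∈ Icc 1 (Fintype.card ι) :=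
  mem_Icc.2 ⟨card_pos.2 ⟨j, by simp⟩, card_le_univ _⟩

theorem upperRank_lt_upperRank {x : ι → α} {j j' : ι} (h : x j < x j') :
    upperRank x j' < upperRank x j :=
  card_lt_card <| (ssubset_iff_of_subset fun i hi => by simp_all [h.le.trans]).2
    ⟨j, by simp [h]⟩

theorem upperRank_injective {x : ι → α} (hx : Function.Injective x) :
    Function.Injective (upperRank x) := by
  intro a b hab
  by_contra hne
  rcases (hx.ne hne).lt_or_gt with h | h
  · exact (upperRank_lt_upperRank h).ne hab.symm
  · exact (upperRank_lt_upperRank h).ne hab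

theorem existsUnique_upperRank_eq {x : ι → α} (hx : Function.Injective x) {k : ℕ}
    (hk : k ∈ Icc 1 (Fintype.card ι)) : ∃! j, upperRank x j = k := by
  have hbij : Function.Bijective fun j => (⟨upperRank x j, upperRank_mem_Icc x j⟩ :
      Icc 1 (Fintype.card ι)) :=
    (Fintype.bijective_iff_injective_and_card _).2
      ⟨fun a b h => upperRank_injective hx (congrArg Subtype.val h), by simp⟩
  simpa [Subtype.ext_iff] using hbij.existsUnique ⟨k, hk⟩

theorem measurable_upperRank [MeasurableSpace α] [TopologicalSpace α] [OpensMeasurableSpace α]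
    [OrderClosedTopology α] [SecondCountableTopology α] (j : ι) :
    Measurable fun x : ι → α => upperRank x j := by
  simp_rw [upperRank, card_filter]
  exact Finset.measurable_sum _ fun i _ =>
    Measurable.ite (measurableSet_le (measurable_pi_apply j) (measurable_pi_apply i))
      measurable_const measurable_const

end Rank

section Probability

variable {Ω ι : Type*} [MeasurableSpace Ω] {P : Measure Ω} [Fintype ι]

theorem sum_measure_eq_one_of_ae_existsUnique [IsProbabilityMeasure P] {A : ι → Set Ω}
    (hA : ∀ i, MeasurableSet (A i)) (h : ∀ᵐ ω ∂P, ∃! i, ω ∈ A i) : ∑ i, P (A i) = 1 := by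
  have hpoint : ∀ ω, (∃! i, ω ∈ A i) → ∑ i, (A i).indicator 1 ω = (1 : ℝ≥0∞) := by
    rintro ω ⟨i, hi, huniq⟩
    rw [sum_eq_single i (fun b _ hb => Set.indicator_of_notMem (fun h => hb (huniq b h)) _)
      (by simp)]
    simp [hi]
  calc ∑ i, P (A i) = ∑ i, ∫⁻ ω, (A i).indicator 1 ω ∂P := by
        simp [lintegral_indicator_one (hA _)]
    _ = ∫⁻ ω, ∑ i, (A i).indicator 1 ω ∂P :=
        (lintegral_finsetSum _ fun i _ => measurable_one.indicator (hA i)).symm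
    _ = ∫⁻ _, 1 ∂P := lintegral_congr_ae (h.mono hpoint)
    _ = 1 := by simp

theorem measure_le_eq_mul_of_measure_eq_const {N : Ω → ℕ} (hN : Measurable N)
    (hpos : ∀ ω, 1 ≤ N ω) {M : ℕ} {c : ℝ≥0∞}
    (hc : ∀ k ∈ Icc 1 M, P {ω | N ω = k} = c) {m : ℕ} (hm : m ≤ M) :
    P {ω | N ω ≤ m} = m * c := by
  have hunion : {ω | N ω ≤ m} = ⋃ k ∈ Icc 1 m, {ω | N ω = k} := by
    ext ω; simp [hpos ω]
  rw [hunion, measure_biUnion_finset (f := fun k => {ω | N ω = k})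
    (Set.pairwiseDisjoint_fiber N _) fun k _ => hN (measurableSet_singleton k),
    sum_congr rfl fun k hk => hc k (Icc_subset_Icc_right hm hk), sum_const, Nat.card_Icc,
    nsmul_eq_mul, Nat.add_sub_cancel]

theorem measure_natCast_div_le_eq {N : Ω → ℕ} (hN : Measurable N) (hpos : ∀ ω, 1 ≤ N ω)
    {M : ℕ} (hM : 0 < M) (hunif : ∀ k ∈ Icc 1 M, P {ω | N ω = k} = (M : ℝ≥0∞)⁻¹) {α : ℝ}
    (hα₀ : 0 ≤ α) (hα₁ : α ≤ 1) : P {ω | (N ω : ℝ) / M ≤ α} = ENNReal.ofReal (⌊α * M⌋₊ / M) := by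
  have hM' : (0 : ℝ) < M := Nat.cast_pos.2 hM
  have hαM : 0 ≤ α * M := by positivity
  have hset : {ω | (N ω : ℝ) / M ≤ α} = {ω | N ω ≤ ⌊α * M⌋₊} := by
    ext ω
    rw [Set.mem_ofPred_eq, Set.mem_ofPred_eq, div_le_iff₀ hM', Nat.le_floor_iff hαM]
  have hfloor : ⌊α * M⌋₊ ≤ M := Nat.floor_le_of_le (by nlinarith)
  rw [hset, measure_le_eq_mul_of_measure_eq_const hN hpos hunif hfloor,
    ENNReal.ofReal_div_of_pos hM', div_eq_mul_inv]
  norm_cast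

section Exchangeable

variable {α : Type*} [LinearOrder α] [MeasurableSpace α] [TopologicalSpace α]
  [OpensMeasurableSpace α] [OrderClosedTopology α] [SecondCountableTopology α]
  {X : Ω → ι → α}

theorem measure_upperRank_eq_of_exchangeable (hX : Measurable X)
    (hexch : ∀ σ : Equiv.Perm ι, P.map (fun ω i => X ω (σ i)) = P.map X) (j j' : ι) (k : ℕ) :
    P {ω | upperRank (X ω) j = k} = P {ω | upperRank (X ω) j' = k} := by
  classical
  have hS : MeasurableSet {x : ι → α | upperRank x j' = k} :=
    measurable_upperRank j' (measurableSet_singleton k)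
  have hXσ : Measurable fun ω i => X ω (Equiv.swap j' j i) := by fun_prop
  calc P {ω | upperRank (X ω) j = k}
      = P.map (fun ω i => X ω (Equiv.swap j' j i)) {x | upperRank x j' = k} := by
        rw [Measure.map_apply hXσ hS]
        congr 1
        ext ω
        rw [Set.mem_ofPred_eq, Set.mem_preimage, Set.mem_ofPred_eq,
          ← Function.comp_def (X ω), upperRank_comp_perm, Equiv.swap_apply_left]
    _ = P {ω | upperRank (X ω) j' = k} := by rw [hexch, Measure.map_apply hX hS]; rfl

theorem measure_upperRank_eq_inv_card [IsProbabilityMeasure P] (hX : Measurable X)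
    (hexch : ∀ σ : Equiv.Perm ι, P.map (fun ω i => X ω (σ i)) = P.map X)
    (hinj : ∀ᵐ ω ∂P, Function.Injective (X ω)) (j : ι) {k : ℕ}
    (hk : k ∈ Icc 1 (Fintype.card ι)) :
    P {ω | upperRank (X ω) j = k} = (Fintype.card ι : ℝ≥0∞)⁻¹ := by
  have hsum := sum_measure_eq_one_of_ae_existsUnique
    (fun i => (measurable_upperRank i).comp hX (measurableSet_singleton k))
    (hinj.mono fun ω hω => existsUnique_upperRank_eq hω hk)
  simp_rw [Set.preimage, Set.mem_singleton_iff, Function.comp_apply,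
    measure_upperRank_eq_of_exchangeable hX hexch _ j k, sum_const, card_univ,
    nsmul_eq_mul] at hsum
  exact ENNReal.eq_inv_of_mul_eq_one_left (by rwa [mul_comm])

end Exchangeable

end Probability

end GFTransducer

open GFTransducer

/-- Exact validity of the GF transducer: for exchangeable a.s.-distinct
`T 0, …, T n`, the quantity `f = #{i : T n ≤ T i}/(n+1)` is uniformly distributed on
`{1/(n+1), …, 1}`, and `P(f ≤ α) = ⌊α(n+1)⌋/(n+1) ≤ α` for all `α ∈ (0,1)`. -/
theorem gf_transducer_exact_validity
    {Ω : Type*} [MeasurableSpace Ω] (P : Measure Ω) [IsProbabilityMeasure P]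
    (n : ℕ) (T : Fin (n + 1) → Ω → ℝ)
    (hmeas : ∀ i, Measurable (T i))
    (hexch : ∀ σ : Equiv.Perm (Fin (n + 1)),
      Measure.map (fun ω i => T (σ i) ω) P = Measure.map (fun ω i => T i ω) P)
    (hdistinct : ∀ᵐ ω ∂P, ∀ i j : Fin (n + 1), i ≠ j → T i ω ≠ T j ω)
    (f : Ω → ℝ)
    (hf : ∀ ω, f ω = ((Finset.univ.filter (fun i : Fin (n + 1) =>
      T (Fin.last n) ω ≤ T i ω)).card : ℝ) / ((n : ℝ) + 1)) :
    (∀ k ∈ Finset.Icc 1 (n + 1),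
        P {ω | f ω = (k : ℝ) / ((n : ℝ) + 1)} = 1 / ((n : ENNReal) + 1)) ∧
      (∀ α ∈ Set.Ioo (0 : ℝ) 1,
        P {ω | f ω ≤ α} = ENNReal.ofReal ((⌊α * ((n : ℝ) + 1)⌋ : ℝ) / ((n : ℝ) + 1)) ∧
          P {ω | f ω ≤ α} ≤ ENNReal.ofReal α) := by
  set X : Ω → Fin (n + 1) → ℝ := fun ω i => T i ω
  set N : Ω → ℕ := fun ω => upperRank (X ω) (Fin.last n)
  have hX : Measurable X := measurable_pi_lambda _ hmeas
  have hfN : ∀ ω, f ω = N ω / ((n : ℝ) + 1) := hf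
  have hinj : ∀ᵐ ω ∂P, Function.Injective (X ω) :=
    hdistinct.mono fun ω h a b hab => by_contra fun hne => h a b hne hab
  have hunif : ∀ k ∈ Icc 1 (n + 1), P {ω | N ω = k} = ((n : ℝ≥0∞) + 1)⁻¹ := fun k hk => by
    simpa using measure_upperRank_eq_inv_card hX hexch hinj (Fin.last n) (by simpa using hk)
  have hn : (0 : ℝ) < n + 1 := by positivity
  refine ⟨fun k hk => ?_, fun α hα => ?_⟩
  · have hset : {ω | f ω = k / ((n : ℝ) + 1)} = {ω | N ω = k} := by
      ext ω; simp [hfN, div_left_inj' hn.ne']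
    rw [hset, hunif k hk, one_div]
  · have hαn : 0 ≤ α * ((n : ℝ) + 1) := mul_nonneg hα.1.le hn.le
    have hP : P {ω | f ω ≤ α} = ENNReal.ofReal (⌊α * ((n : ℝ) + 1)⌋₊ / ((n : ℝ) + 1)) := by
      simpa [hfN] using measure_natCast_div_le_eq (M := n + 1)
        ((measurable_upperRank _).comp hX) (fun ω => (mem_Icc.1 (upperRank_mem_Icc (X ω) _)).1)
        n.succ_pos (by simpa using hunif) hα.1.le hα.2.le
    rw [hP, natCast_floor_eq_intCast_floor hαn]
    exact ⟨rfl, ENNReal.ofReal_le_ofReal ((div_le_iff₀ hn).2 (Int.floor_le _))⟩
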